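/- arXiv:2509.07544 — 2 statements merged into one kernel-verified Lean document; each statement's English description precedes it below -/
import Mathlib

section
/- Let Γ be the image of a continuous closed simple curve in ℝ² that is the boundary (frontier) of a compact convex set K with nonempty interior. Then for every point α ∈ K there exist points γ₁, γ₂ ∈ Γ such that α = (γ₁ + γ₂)/2. -/
open Metric Set

lemma ray_hits_frontier {E : Type*} [NormedAddCommGroup E] [NormedSpace ℝ E]
    {C : Set E} (hC : IsCompact C) {a x : E} (hx : x ∈ C) (hne : x ≠ a) :
    ∃ z ∈ frontier C, x ∈ segment ℝ a z := by
  set v := x - a with hv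
  have hv0 : ‖v‖ > 0 := by simpa [hv, sub_eq_zero] using hne
  set T : Set ℝ := {t : ℝ | a + t • v ∈ C} with hT
  have hTclosed : IsClosed T := by
    have : T = (fun t : ℝ => a + t • v) ⁻¹' C := rfl
    rw [this]
    exact hC.isClosed.preimage (by continuity)
  have h1T : (1 : ℝ) ∈ T := by simp [hT, hv, hx]
  obtain ⟨r, hr⟩ := (isBounded_iff_subset_closedBall a).1 hC.isBounded
  have hbdd : BddAbove T := by
    refine ⟨r / ‖v‖, fun t ht => ?_⟩
    have := hr ht
    simp only [mem_closedBall, dist_eq_norm, add_sub_cancel_left, norm_smul] at this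
    have h2 : |t| * ‖v‖ ≤ r := by simpa [Real.norm_eq_abs] using this
    calc t ≤ |t| := le_abs_self t
    _ ≤ r / ‖v‖ := (le_div_iff₀ hv0).2 h2
  set t₀ := sSup T with ht₀
  have ht₀T : t₀ ∈ T := hTclosed.csSup_mem ⟨1, h1T⟩ hbdd
  have ht₀1 : (1 : ℝ) ≤ t₀ := le_csSup hbdd h1T
  set z := a + t₀ • v with hz
  refine ⟨z, ⟨?_, ?_⟩, ?_⟩
  · exact subset_closure ht₀T
  · -- z ∉ interior C
    intro hzint
    rw [mem_interior_iff_mem_nhds, Metric.mem_nhds_iff] at hzint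
    obtain ⟨ε, hε, hball⟩ := hzint
    set δ := ε / (2 * ‖v‖) with hδ
    have hδpos : 0 < δ := by positivity
    have hmem : a + (t₀ + δ) • v ∈ ball z ε := by
      simp only [mem_ball, dist_eq_norm, hz]
      have : a + (t₀ + δ) • v - (a + t₀ • v) = δ • v := by
        rw [add_smul]; abel
      rw [this, norm_smul, Real.norm_eq_abs, abs_of_pos hδpos, hδ]
      rw [div_mul_eq_mul_div, mul_comm]
      rw [div_lt_iff₀ (by positivity)]
      nlinarith
    have : t₀ + δ ∈ T := hball hmem
    have := le_csSup hbdd this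
    linarith
  · -- x ∈ segment a z
    have ht₀pos : (0:ℝ) < t₀ := by linarith
    refine ⟨1 - t₀⁻¹, t₀⁻¹, by
      simp only [sub_nonneg]
      exact inv_le_one_of_one_le₀ ht₀1, by positivity, by ring, ?_⟩
    have hinv : t₀⁻¹ * t₀ = 1 := inv_mul_cancel₀ (ne_of_gt ht₀pos)
    rw [hz, smul_add, smul_smul, hinv, one_smul, hv]
    rw [sub_smul, one_smul]
    abel

/-- If `Γ` is the image of a continuous closed simple curve in `ℝ²` that is the frontier of a
compact convex set `K` with nonempty interior, then every point of `K` is the midpoint of two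
points of `Γ`. -/
theorem stmt_0 (K Γ : Set (EuclideanSpace ℝ (Fin 2)))
    (hK : IsCompact K) (hconv : Convex ℝ K) (hint : (interior K).Nonempty)
    (hΓ : Γ = frontier K)
    (f : AddCircle (1 : ℝ) → EuclideanSpace ℝ (Fin 2))
    (hf : Continuous f) (hinj : Function.Injective f) (hrange : Set.range f = Γ) :
    ∀ α ∈ K, ∃ γ₁ ∈ Γ, ∃ γ₂ ∈ Γ, α = midpoint ℝ γ₁ γ₂ := by
  subst hΓ
  intro α hα
  by_cases hαf : α ∈ frontier K
  · exact ⟨α, hαf, α, hαf, (midpoint_self ℝ α).symm⟩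
  -- α ∈ interior K
  have hαint : α ∈ interior K := by
    rcases (em (α ∈ interior K)) with h | h
    · exact h
    · exact absurd ⟨subset_closure hα, h⟩ hαf
  set σ : EuclideanSpace ℝ (Fin 2) ≃ₜ EuclideanSpace ℝ (Fin 2) :=
    (Homeomorph.neg _).trans (Homeomorph.addLeft (α + α)) with hσ
  have hσapp : ∀ x, σ x = (α + α) + (-x) := fun x => rfl
  have hσσ : ∀ x, σ (σ x) = x := by intro x; simp [hσapp]; abel
  have hσimg : ∀ S : Set (EuclideanSpace ℝ (Fin 2)), σ '' (σ '' S) = S := by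
    intro S
    rw [Set.image_image]
    simp [hσσ]
  set K' := σ '' K with hK'
  have hK'cpt : IsCompact K' := hK.image σ.continuous
  have hfrK' : frontier K' = σ '' frontier K := (σ.image_frontier K).symm
  have hintK' : interior K' = σ '' interior K := (σ.image_interior K).symm
  have hσα : σ α = α := by simp [hσapp]
  have hαintK' : α ∈ interior K' := by
    rw [hintK']; exact ⟨α, hαint, hσα⟩
  have hαK' : α ∈ K' := interior_subset hαintK'
  have hΓconn : IsPreconnected (frontier K) := by
    rw [← hrange]
    exact (isPreconnected_range hf)
  have hΓne : (frontier K).Nonempty := by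
    rw [← hrange]; exact ⟨f 0, 0, rfl⟩
  -- main claim
  have key : ∃ y, y ∈ frontier K ∧ y ∈ frontier K' := by
    by_contra hdisj
    push_neg at hdisj
    -- K = K' leads to contradiction
    have hKK' : ∀ h : K = K', False := by
      intro h
      obtain ⟨y, hy⟩ := hΓne
      exact hdisj y hy (by rwa [h] at hy)
    have hrefl : K' ⊆ K → K ⊆ K' := by
      intro h
      have := Set.image_mono (f := σ) h
      rwa [hσimg] at this
    -- dichotomy for frontier K' w.r.t. K
    have hconnK' : IsPreconnected (frontier K') := by
      rw [hfrK']
      exact hΓconn.image σ σ.continuous.continuousOn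
    have hcover : frontier K' ⊆ interior K ∪ (closure K)ᶜ := by
      intro x hx
      rcases em (x ∈ closure K) with h | h
      · rcases em (x ∈ interior K) with h' | h'
        · exact Or.inl h'
        · exact absurd hx (fun hx' => hdisj x ⟨h, h'⟩ hx')
      · exact Or.inr h
    have hdich := hconnK'.subset_or_subset isOpen_interior (isClosed_closure).isOpen_compl
      (disjoint_compl_right.mono_left interior_subset_closure) hcover
    rcases hdich with hcase | hcase
    · -- frontier K' ⊆ interior K ⇒ K' ⊆ K
      have hsub : K' ⊆ K := by
        intro x hx
        by_contra hxK
        have hxa : x ≠ α := fun h => hxK (h ▸ hα)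
        obtain ⟨z, hz, hseg⟩ := ray_hits_frontier hK'cpt hx hxa
        have hzK : z ∈ K := interior_subset (hcase hz)
        exact hxK (hconv.segment_subset hα hzK hseg)
      exact hKK' (Set.Subset.antisymm (hrefl hsub) hsub)
    · -- frontier K' ∩ K = ∅ ⇒ K ⊆ interior K'
      have hKcl : closure K = K := hK.isClosed.closure_eq
      rw [hKcl] at hcase
      have hcover2 : K ⊆ interior K' ∪ (closure K')ᶜ := by
        intro x hx
        rcases em (x ∈ closure K') with h | h
        · rcases em (x ∈ interior K') with h' | h'
          · exact Or.inl h'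
          · exact absurd hx (hcase ⟨h, h'⟩)
        · exact Or.inr h
      have hdich2 := hconv.isPreconnected.subset_or_subset isOpen_interior
        (isClosed_closure).isOpen_compl
        (disjoint_compl_right.mono_left interior_subset_closure) hcover2
      rcases hdich2 with hcase2 | hcase2
      · have hsub : K ⊆ K' := fun x hx => interior_subset (hcase2 hx)
        have hsub' : K' ⊆ K := by
          have := Set.image_mono (f := σ) hsub
          rwa [hσimg] at this
        exact hKK' (Set.Subset.antisymm hsub hsub')
      · exact (hcase2 hα) (subset_closure hαK')
  obtain ⟨y, hy, hy'⟩ := key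
  rw [hfrK'] at hy'
  obtain ⟨z, hz, hzy⟩ := hy'
  refine ⟨y, hy, z, hz, ?_⟩
  rw [← hzy, hσapp, midpoint_eq_smul_add]
  rw [add_assoc, neg_add_cancel, add_zero, smul_add, ← add_smul]
  norm_num
end

section
/- Let M ∈ ℤ^{g×g} and T ∈ ℝ^{g×g} with T symmetric and positive definite, and let Λ ⊆ ℂ^g be the lattice generated by the standard basis vectors e₁,…,e_g together with the columns of (1/2)M + iT. Consider the antiholomorphic involution σ(z) = conj(z) on ℂ^g/Λ. Then the set of fixed points of σ, i.e. points represented by x + iy with 2iy ∈ Λ, has exactly 2^{g-γ} connected components, where γ is the rank of M over ℤ/2. -/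
open Complex

private noncomputable def PtDef {g : ℕ} (T : Matrix (Fin g) (Fin g) ℝ) (x : Fin g → ℝ) (m : Fin g → ℤ) :
    Fin g → ℂ :=
  fun j => (x j : ℂ) + Complex.I * ((T.mulVec (fun k => (m k : ℝ)) j / 2 : ℝ) : ℂ)

private def lft {g : ℕ} (v : Fin g → ZMod 2) : Fin g → ℤ := fun i => ((v i).val : ℤ)

private lemma Pt_re {g : ℕ} (T : Matrix (Fin g) (Fin g) ℝ) (x : Fin g → ℝ) (m : Fin g → ℤ)
    (j : Fin g) : (PtDef T x m j).re = x j := by simp [PtDef]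

private lemma Pt_im {g : ℕ} (T : Matrix (Fin g) (Fin g) ℝ) (x : Fin g → ℝ) (m : Fin g → ℤ)
    (j : Fin g) : (PtDef T x m j).im = T.mulVec (fun k => (m k : ℝ)) j / 2 := by simp [PtDef]

private lemma lft_cast {g : ℕ} (v : Fin g → ZMod 2) (i : Fin g) :
    ((lft v i : ℤ) : ZMod 2) = v i := by
  simp only [lft]
  push_cast [ZMod.natCast_val]
  rfl

private lemma castZ_mulVec {g : ℕ} (M : Matrix (Fin g) (Fin g) ℤ) (m : Fin g → ℤ) (j : Fin g) :
    (((M.mulVec m) j : ℤ) : ZMod 2)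
      = ((M.map (Int.cast : ℤ → ZMod 2)).mulVec (fun i => ((m i : ℤ) : ZMod 2))) j := by
  simp only [Matrix.mulVec, dotProduct, Matrix.map_apply]
  push_cast
  rfl

private theorem mem_lat_iff {g : ℕ} (M : Matrix (Fin g) (Fin g) ℤ) (T : Matrix (Fin g) (Fin g) ℝ)
    (w : Fin g → ℂ) :
    w ∈ Submodule.span ℤ
      ((Set.range fun i : Fin g => (fun j : Fin g => if j = i then (1 : ℂ) else 0)) ∪
       (Set.range fun i : Fin g =>
          (fun j : Fin g => (1 / 2 : ℂ) * (M j i : ℂ) + Complex.I * (T j i : ℂ)))) ↔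
    ∃ n m : Fin g → ℤ,
      (∀ j, (w j).re = (n j : ℝ) + (1 / 2) * ((M.mulVec m) j : ℝ)) ∧
      (∀ j, (w j).im = T.mulVec (fun k => ((m k : ℝ))) j) := by
  have key : ∀ (n m : Fin g → ℤ) (j : Fin g),
      ((∑ i, n i • (fun j : Fin g => if j = i then (1 : ℂ) else 0)) +
       (∑ i, m i • (fun j : Fin g => (1 / 2 : ℂ) * (M j i : ℂ) + Complex.I * (T j i : ℂ)))) j
      = ⟨(n j : ℝ) + (1 / 2) * ((M.mulVec m) j : ℝ), T.mulVec (fun k => ((m k : ℝ))) j⟩ := by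
    intro n m j
    have hred : ((∑ i, n i • (fun j : Fin g => if j = i then (1 : ℂ) else 0)) +
       (∑ i, m i • (fun j : Fin g => (1 / 2 : ℂ) * (M j i : ℂ) + Complex.I * (T j i : ℂ)))) j
       = (∑ i, (n i : ℂ) * (if j = i then 1 else 0)) +
         (∑ i, (m i : ℂ) * ((1 / 2 : ℂ) * (M j i : ℂ) + Complex.I * (T j i : ℂ))) := by
      simp [Finset.sum_apply, zsmul_eq_mul]
    rw [hred]
    have e1re : ∀ i, ((n i : ℂ) * (if j = i then (1:ℂ) else 0)).re
        = if j = i then (n i : ℝ) else 0 := by intro i; split <;> simp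
    have e1im : ∀ i, ((n i : ℂ) * (if j = i then (1:ℂ) else 0)).im = 0 := by
      intro i; split <;> simp
    have e2re : ∀ i, ((m i : ℂ) * ((1 / 2 : ℂ) * (M j i : ℂ) + Complex.I * (T j i : ℂ))).re
        = (m i : ℝ) * ((1 / 2) * (M j i : ℝ)) := by
      intro i
      simp [Complex.mul_re, Complex.add_re, Complex.add_im, Complex.mul_im]
      try norm_num
    have e2im : ∀ i, ((m i : ℂ) * ((1 / 2 : ℂ) * (M j i : ℂ) + Complex.I * (T j i : ℂ))).im
        = (m i : ℝ) * (T j i) := by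
      intro i
      simp [Complex.mul_re, Complex.add_re, Complex.add_im, Complex.mul_im]
      try norm_num
    apply Complex.ext
    · rw [Complex.add_re, Complex.re_sum, Complex.re_sum]
      simp only [e1re, e2re, Finset.sum_ite_eq, Finset.mem_univ, if_true]
      congr 1
      simp only [Matrix.mulVec, dotProduct]
      push_cast
      rw [Finset.mul_sum]
      exact Finset.sum_congr rfl fun i _ => by ring
    · rw [Complex.add_im, Complex.im_sum, Complex.im_sum]
      simp only [e1im, e2im, Finset.sum_const_zero, zero_add]
      simp only [Matrix.mulVec, dotProduct]
      exact Finset.sum_congr rfl fun i _ => by ring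
  rw [Submodule.span_union, Submodule.mem_sup]
  constructor
  · rintro ⟨a, ha, b, hb, hab⟩
    rw [Submodule.mem_span_range_iff_exists_fun] at ha hb
    obtain ⟨n, hn⟩ := ha
    obtain ⟨m, hm⟩ := hb
    refine ⟨n, m, fun j => ?_, fun j => ?_⟩ <;>
      rw [← hab, ← hn, ← hm, key n m j]
  · rintro ⟨n, m, h1, h2⟩
    refine ⟨∑ i, n i • (fun j : Fin g => if j = i then (1 : ℂ) else 0),
      Submodule.sum_mem _ fun i _ => Submodule.smul_mem _ _ (Submodule.subset_span ⟨i, rfl⟩),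
      ∑ i, m i • (fun j : Fin g => (1 / 2 : ℂ) * (M j i : ℂ) + Complex.I * (T j i : ℂ)),
      Submodule.sum_mem _ fun i _ => Submodule.smul_mem _ _ (Submodule.subset_span ⟨i, rfl⟩),
      ?_⟩
    funext j
    rw [key n m j]
    apply Complex.ext
    · exact (h1 j).symm
    · exact (h2 j).symm

private theorem aux_card_components {α : Type*} [TopologicalSpace α] {ι : Type*} [Finite ι]
    (S : Set α) (C : ι → Set α) (huniv : S = ⋃ i, C i)
    (hne : ∀ i, (C i).Nonempty) (hconn : ∀ i, IsPreconnected (C i))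
    (hdisj : ∀ i j, i ≠ j → Disjoint (C i) (C j))
    (hclosed : ∀ i, ∃ F, IsClosed F ∧ C i = S ∩ F) :
    Nat.card (ConnectedComponents S) = Nat.card ι := by
  have hsub : ∀ i, C i ⊆ S := fun i => huniv ▸ Set.subset_iUnion C i
  set D : ι → Set S := fun i => (Subtype.val) ⁻¹' (C i) with hD
  have hDclosed : ∀ i, IsClosed (D i) := by
    intro i
    obtain ⟨F, hF, hCF⟩ := hclosed i
    have : D i = Subtype.val ⁻¹' F := by
      ext x; simp only [hD, Set.mem_preimage, hCF, Set.mem_inter_iff, x.2, true_and]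
    rw [this]; exact hF.preimage continuous_subtype_val
  have hmemD : ∀ (x : S), ∃ i, x ∈ D i := by
    intro x
    have h2 : (x : α) ∈ ⋃ i, C i := by rw [← huniv]; exact x.2
    obtain ⟨i, hi⟩ := Set.mem_iUnion.mp h2
    exact ⟨i, hi⟩
  have hDopen : ∀ i, IsOpen (D i) := by
    intro i
    have hcompl : (D i)ᶜ = ⋃ j ∈ {j | j ≠ i}, D j := by
      ext x
      simp only [Set.mem_compl_iff, Set.mem_iUnion, Set.mem_setOf_eq]
      constructor
      · intro hx
        obtain ⟨j, hj⟩ := hmemD x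
        exact ⟨j, fun h => hx (h ▸ hj), hj⟩
      · rintro ⟨j, hji, hxj⟩ hxi
        exact Set.disjoint_left.mp (hdisj j i hji) hxj hxi
    rw [← isClosed_compl_iff, hcompl]
    exact Set.Finite.isClosed_biUnion (Set.toFinite _) (fun j _ => hDclosed j)
  have hDconn : ∀ i, IsPreconnected (D i) := by
    intro i
    have himg : Subtype.val '' D i = C i := by
      rw [Subtype.image_preimage_coe]
      exact Set.inter_eq_self_of_subset_right (hsub i)
    exact (Topology.IsInducing.subtypeVal.isPreconnected_image).mp (himg ▸ hconn i)
  have hpt : ∀ i, ∃ x : S, x ∈ D i := by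
    intro i
    obtain ⟨y, hy⟩ := hne i
    exact ⟨⟨y, hsub i hy⟩, hy⟩
  choose pt hptD using hpt
  have hcomp : ∀ (x : S) i, x ∈ D i → connectedComponent x = D i := fun x i hx =>
    subset_antisymm (IsClopen.connectedComponent_subset ⟨hDclosed i, hDopen i⟩ hx)
      ((hDconn i).subset_connectedComponent hx)
  have hbij : Function.Bijective (fun i => ConnectedComponents.mk (pt i)) := by
    constructor
    · intro i j hij
      simp only [ConnectedComponents.coe_eq_coe] at hij
      rw [hcomp _ i (hptD i), hcomp _ j (hptD j)] at hij
      by_contra hne'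
      have h1 : pt i ∈ D j := hij ▸ hptD i
      exact Set.disjoint_left.mp (hdisj i j hne') (hptD i) h1
    · intro c
      obtain ⟨x, rfl⟩ := ConnectedComponents.surjective_coe c
      obtain ⟨i, hi⟩ := hmemD x
      exact ⟨i, by rw [ConnectedComponents.coe_eq_coe, hcomp _ i (hptD i), hcomp _ i hi]⟩
  exact (Nat.card_eq_of_bijective _ hbij).symm

/-- The fixed locus of the antiholomorphic involution induced by complex conjugation on the
complex torus `ℂ^g/Λ`, where `Λ` is generated by the standard basis vectors together with the
columns of `(1/2)M + iT`, has exactly `2^(g-γ)` connected components, where `γ` is the rank of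
`M` modulo `2`. -/
theorem stmt_6 (g : ℕ) (hg : 1 ≤ g) (M : Matrix (Fin g) (Fin g) ℤ)
    (T : Matrix (Fin g) (Fin g) ℝ) (hTsymm : T.IsSymm) (hTpd : T.PosDef)
    (Λ : AddSubgroup (Fin g → ℂ))
    (hΛ : Λ = (Submodule.span ℤ
      ((Set.range fun i : Fin g => (fun j : Fin g => if j = i then (1 : ℂ) else 0)) ∪
       (Set.range fun i : Fin g =>
          (fun j : Fin g => (1 / 2 : ℂ) * (M j i : ℂ) + Complex.I * (T j i : ℂ))))).toAddSubgroup)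
    (S : Set ((Fin g → ℂ) ⧸ Λ))
    (hS : S = {q | ∃ z : Fin g → ℂ, QuotientAddGroup.mk z = q ∧
        QuotientAddGroup.mk (fun i => (starRingEnd ℂ) (z i)) = q})
    (γ : ℕ) (hγ : γ = (M.map (Int.cast : ℤ → ZMod 2)).rank) :
    Nat.card (ConnectedComponents S) = 2 ^ (g - γ) := by
  classical
  subst hγ
  have hmem : ∀ w : Fin g → ℂ, w ∈ Λ ↔
      ∃ n m : Fin g → ℤ,
        (∀ j, (w j).re = (n j : ℝ) + (1 / 2) * ((M.mulVec m) j : ℝ)) ∧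
        (∀ j, (w j).im = T.mulVec (fun k => ((m k : ℝ))) j) := by
    intro w
    rw [hΛ, Submodule.mem_toAddSubgroup]
    exact mem_lat_iff M T w
  have hmk : ∀ a b : Fin g → ℂ,
      (QuotientAddGroup.mk a : (Fin g → ℂ) ⧸ Λ) = QuotientAddGroup.mk b ↔ a - b ∈ Λ :=
    fun a b => QuotientAddGroup.eq_iff_sub_mem
  have hTdet : IsUnit T.det := isUnit_iff_ne_zero.mpr (ne_of_gt hTpd.det_pos)
  have hTinv : ∀ w : Fin g → ℝ, T.mulVec w = 0 → w = 0 := by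
    intro w hw
    by_contra hne0
    have h := hTpd.dotProduct_mulVec_pos hne0
    rw [hw] at h
    simp at h
  -- parity tool
  have hveq : ∀ v v' : Fin g → ZMod 2, (∀ i, ∃ c : ℤ, lft v i - lft v' i = 2 * c) → v = v' := by
    intro v v' h
    funext i
    obtain ⟨c, hc⟩ := h i
    have h0 : ((lft v i - lft v' i : ℤ) : ZMod 2) = 0 := by
      rw [hc]; push_cast; rw [show (2 : ZMod 2) = 0 from rfl]; ring
    rw [Int.cast_sub, sub_eq_zero, lft_cast, lft_cast] at h0
    exact h0
  set K : Submodule (ZMod 2) (Fin g → ZMod 2) :=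
    LinearMap.ker (Matrix.mulVecLin (M.map (Int.cast : ℤ → ZMod 2))) with hK
  set C : K → Set ((Fin g → ℂ) ⧸ Λ) :=
    fun v => Set.range (fun x : Fin g → ℝ => QuotientAddGroup.mk (PtDef T x (lft v.1))) with hC
  have hCmem : ∀ (v : K) (q : (Fin g → ℂ) ⧸ Λ),
      q ∈ C v ↔ ∃ x : Fin g → ℝ, QuotientAddGroup.mk (PtDef T x (lft v.1)) = q := by
    intro v q
    rw [hC]
    exact Iff.rfl
  -- membership in K from evenness and back
  have hKmem : ∀ vv : Fin g → ZMod 2, vv ∈ K ↔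
      (M.map (Int.cast : ℤ → ZMod 2)).mulVec vv = 0 := by
    intro vv
    rw [hK, LinearMap.mem_ker, Matrix.mulVecLin_apply]
  -- C v ⊆ S
  have hCS : ∀ v : K, C v ⊆ S := by
    intro v q hq
    obtain ⟨x, rfl⟩ := (hCmem v q).mp hq
    rw [hS]
    refine ⟨PtDef T x (lft v.1), rfl, ?_⟩
    rw [hmk, hmem]
    have heven : ∀ j, ∃ c : ℤ, (M.mulVec (lft v.1)) j = 2 * c := by
      intro j
      have hv' : (M.map (Int.cast : ℤ → ZMod 2)).mulVec v.1 = 0 := (hKmem v.1).mp v.2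
      have h0 : ((M.mulVec (lft v.1) j : ℤ) : ZMod 2) = 0 := by
        rw [castZ_mulVec]
        have hl : (fun i => ((lft v.1 i : ℤ) : ZMod 2)) = v.1 := funext fun i => lft_cast v.1 i
        rw [hl, hv']
        rfl
      obtain ⟨c, hc⟩ := (ZMod.intCast_zmod_eq_zero_iff_dvd _ 2).mp h0
      exact ⟨c, hc⟩
    choose c hc using heven
    refine ⟨c, fun i => -lft v.1 i, fun j => ?_, fun j => ?_⟩
    · have hneg : (M.mulVec fun i => -lft v.1 i) j = -(2 * c j) := by
        have hnn : (fun i => -lft v.1 i) = -(lft v.1) := rfl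
        rw [hnn, Matrix.mulVec_neg, Pi.neg_apply, hc]
      rw [hneg]
      simp only [Pi.sub_apply, Complex.sub_re, Complex.conj_re, sub_self]
      push_cast
      ring
    · have hneg : (fun k => ((-lft v.1 k : ℤ) : ℝ)) = -(fun k => ((lft v.1 k : ℤ) : ℝ)) := by
        funext k; simp only [Pi.neg_apply]; push_cast; ring
      rw [hneg, Matrix.mulVec_neg]
      simp only [Pi.sub_apply, Complex.sub_im, Complex.conj_im, Pt_im, Pi.neg_apply]
      ring
  -- S ⊆ ⋃ C v
  have hSsub : S ⊆ ⋃ v : K, C v := by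
    intro q hq
    rw [hS] at hq
    obtain ⟨z, rfl, hz2⟩ := hq
    rw [hmk, hmem] at hz2
    obtain ⟨n, m, h1, h2⟩ := hz2
    have h2' : ∀ j, (z j).im = -(T.mulVec (fun k => (m k : ℝ)) j) / 2 := by
      intro j
      have h := h2 j
      simp only [Pi.sub_apply, Complex.sub_im, Complex.conj_im] at h
      linarith
    have h1' : ∀ j, (M.mulVec m) j = -2 * n j := by
      intro j
      have h := h1 j
      simp only [Pi.sub_apply, Complex.sub_re, Complex.conj_re, sub_self] at h
      have hr : ((M.mulVec m) j : ℝ) = ((-2 * n j : ℤ) : ℝ) := by push_cast; linarith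
      exact_mod_cast hr
    set vfun : Fin g → ZMod 2 := fun i => ((-m i : ℤ) : ZMod 2) with hvfun
    have hvK : vfun ∈ K := by
      rw [hKmem]
      funext j
      have hcast : (((M.mulVec (fun i => -m i)) j : ℤ) : ZMod 2)
          = ((M.map (Int.cast : ℤ → ZMod 2)).mulVec (fun i => ((-m i : ℤ) : ZMod 2))) j :=
        castZ_mulVec M _ j
      have hval : (M.mulVec (fun i => -m i)) j = 2 * n j := by
        have hnn : (fun i => -m i) = -m := rfl
        rw [hnn, Matrix.mulVec_neg, Pi.neg_apply, h1' j]
        ring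
      have : ((M.map (Int.cast : ℤ → ZMod 2)).mulVec vfun) j = (((2 * n j : ℤ)) : ZMod 2) := by
        rw [hvfun, ← hcast, hval]
      rw [Pi.zero_apply, this]
      push_cast
      rw [show (2 : ZMod 2) = 0 from rfl]
      ring
    have hpar : ∀ i, ∃ c : ℤ, (-(m i)) - lft vfun i = 2 * c := by
      intro i
      have h0 : (((-(m i)) - lft vfun i : ℤ) : ZMod 2) = 0 := by
        rw [Int.cast_sub, lft_cast, hvfun]
        ring
      obtain ⟨c, hc⟩ := (ZMod.intCast_zmod_eq_zero_iff_dvd _ 2).mp h0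
      exact ⟨c, hc⟩
    choose k hk using hpar
    refine Set.mem_iUnion.mpr ⟨⟨vfun, hvK⟩, (hCmem _ _).mpr
      ⟨(fun j => (z j).re - (1 / 2) * ((M.mulVec k) j : ℝ)), ?_⟩⟩
    rw [hmk, hmem]
    refine ⟨0, fun i => -k i, fun j => ?_, fun j => ?_⟩
    · have hneg : (M.mulVec fun i => -k i) j = -((M.mulVec k) j) := by
        have hnn : (fun i => -k i) = -k := rfl
        rw [hnn, Matrix.mulVec_neg, Pi.neg_apply]
      rw [hneg]
      simp only [Pi.sub_apply, Complex.sub_re, Pt_re, Pi.zero_apply]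
      push_cast
      ring
    · have hmeq : ∀ i, (-(m i) : ℝ) = ((lft vfun i : ℤ) : ℝ) + 2 * (k i : ℝ) := by
        intro i
        have h := congrArg (Int.cast : ℤ → ℝ) (hk i)
        push_cast at h
        push_cast
        linarith
      have hvec : (fun i => ((-(m i) : ℤ) : ℝ))
          = (fun i => ((lft vfun i : ℤ) : ℝ)) + (2 : ℝ) • (fun i => ((k i : ℤ) : ℝ)) := by
        funext i
        rw [Pi.add_apply, Pi.smul_apply, smul_eq_mul]
        push_cast
        push_cast at hmeq
        linarith [hmeq i]
      have hmv' : ∀ j, -(T.mulVec (fun i => ((m i : ℤ) : ℝ)) j)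
          = T.mulVec (fun i => ((lft vfun i : ℤ) : ℝ)) j
            + 2 * T.mulVec (fun i => ((k i : ℤ) : ℝ)) j := by
        intro j
        have hnn : (fun i => ((-(m i) : ℤ) : ℝ)) = -(fun i => ((m i : ℤ) : ℝ)) := by
          funext i; simp only [Pi.neg_apply]; push_cast; ring
        have h := congrFun (congrArg T.mulVec hvec) j
        rw [hnn, Matrix.mulVec_neg] at h
        rw [Matrix.mulVec_add, Matrix.mulVec_smul] at h
        simp only [Pi.add_apply, Pi.neg_apply, Pi.smul_apply, smul_eq_mul] at h
        linarith
      have hneg : (fun i => ((-k i : ℤ) : ℝ)) = -(fun i => ((k i : ℤ) : ℝ)) := by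
        funext i; simp only [Pi.neg_apply]; push_cast; ring
      rw [hneg, Matrix.mulVec_neg]
      simp only [Pi.sub_apply, Complex.sub_im, Pt_im, h2' j, Pi.neg_apply]
      have h := hmv' j
      linarith
  -- disjointness
  have hdisj : ∀ v v' : K, v ≠ v' → Disjoint (C v) (C v') := by
    intro v v' hnevv
    rw [Set.disjoint_left]
    intro q hq hq'
    obtain ⟨x, rfl⟩ := (hCmem v q).mp hq
    obtain ⟨x', heq⟩ := (hCmem v' _).mp hq'
    rw [hmk, hmem] at heq
    obtain ⟨n, m, h1, h2⟩ := heq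
    have hzeroin : T.mulVec ((fun i => ((lft v'.1 i : ℤ) : ℝ)) - (fun i => ((lft v.1 i : ℤ) : ℝ))
        - (2 : ℝ) • fun i => ((m i : ℤ) : ℝ)) = 0 := by
      funext j
      have h := h2 j
      simp only [Pi.sub_apply, Complex.sub_im, Pt_im] at h
      rw [Matrix.mulVec_sub, Matrix.mulVec_sub, Matrix.mulVec_smul]
      simp only [Pi.sub_apply, Pi.smul_apply, smul_eq_mul, Pi.zero_apply]
      linarith
    have h0 := hTinv _ hzeroin
    refine hnevv (Subtype.ext ((hveq v.1 v'.1 (fun i => ?_)).symm).symm)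
    refine ⟨-(m i), ?_⟩
    have h := congrFun h0 i
    simp only [Pi.sub_apply, Pi.smul_apply, smul_eq_mul, Pi.zero_apply] at h
    have hr : ((lft v.1 i - lft v'.1 i : ℤ) : ℝ) = ((2 * -(m i) : ℤ) : ℝ) := by
      push_cast
      linarith
    exact_mod_cast hr
  -- the map ψ
  have hψcont : Continuous (fun z : Fin g → ℂ => T⁻¹.mulVec (fun j => (z j).im)) := by
    apply continuous_pi
    intro j
    simp only [Matrix.mulVec, dotProduct]
    apply continuous_finset_sum
    intro kk _
    exact continuous_const.mul (Complex.continuous_im.comp (continuous_apply kk))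
  set ψ : (Fin g → ℂ) →+ (Fin g → ℝ) :=
    AddMonoidHom.mk' (fun z => T⁻¹.mulVec (fun j => (z j).im)) (by
      intro a b
      have h : (fun j => ((a + b) j).im) = (fun j => (a j).im) + (fun j => (b j).im) := by
        funext j; simp
      simp only [h, Matrix.mulVec_add]) with hψ
  set L₂ : AddSubgroup (Fin g → ℝ) :=
    (Submodule.span ℤ (Set.range fun i : Fin g =>
      (fun j : Fin g => if j = i then (1 : ℝ) else 0))).toAddSubgroup with hL₂def
  have hintvec : ∀ nn : Fin g → ℤ, (fun j => (nn j : ℝ)) ∈ L₂ := by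
    intro nn
    rw [hL₂def, Submodule.mem_toAddSubgroup, Submodule.mem_span_range_iff_exists_fun]
    refine ⟨nn, ?_⟩
    funext j
    simp [Finset.sum_apply, zsmul_eq_mul, mul_ite, Finset.sum_ite_eq]
  have hL₂mem : ∀ w : Fin g → ℝ, w ∈ L₂ ↔ ∀ i, ∃ c : ℤ, w i = c := by
    intro w
    constructor
    · intro hw
      rw [hL₂def, Submodule.mem_toAddSubgroup, Submodule.mem_span_range_iff_exists_fun] at hw
      obtain ⟨cc, hcc⟩ := hw
      intro i
      refine ⟨cc i, ?_⟩
      rw [← hcc]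
      simp [Finset.sum_apply, zsmul_eq_mul, mul_ite, Finset.sum_ite_eq]
    · intro h
      choose cc hcc using h
      have hw : w = fun j => (cc j : ℝ) := funext hcc
      rw [hw]
      exact hintvec cc
  have hL₂closed : IsClosed (L₂ : Set (Fin g → ℝ)) := by
    have hset : (L₂ : Set (Fin g → ℝ))
        = ⋂ i, (fun w : Fin g → ℝ => w i) ⁻¹' (Set.range (Int.cast : ℤ → ℝ)) := by
      ext w
      simp only [Set.mem_iInter, Set.mem_preimage, Set.mem_range, SetLike.mem_coe, hL₂mem w]
      constructor
      · intro h i; obtain ⟨c, hc⟩ := h i; exact ⟨c, hc.symm⟩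
      · intro h i; obtain ⟨c, hc⟩ := h i; exact ⟨c, hc.symm⟩
    rw [hset]
    exact isClosed_iInter fun i =>
      (Int.isClosedEmbedding_coe_real.isClosed_range).preimage (continuous_apply i)
  have hψΛ : ∀ w ∈ Λ, ψ w ∈ L₂ := by
    intro w hw
    rw [hmem] at hw
    obtain ⟨n, m, h1, h2⟩ := hw
    have him : (fun j => (w j).im) = T.mulVec (fun k => (m k : ℝ)) := funext h2
    have hred : ψ w = T⁻¹.mulVec (fun j => (w j).im) := rfl
    rw [hred, him, Matrix.mulVec_mulVec, Matrix.nonsing_inv_mul T hTdet, Matrix.one_mulVec]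
    exact hintvec m
  set ψbar := QuotientAddGroup.map Λ L₂ ψ (@id (Λ ≤ AddSubgroup.comap ψ L₂) (fun w hw => hψΛ w hw)) with hψbar
  have hψbar_cont : Continuous ψbar := by
    apply (QuotientAddGroup.isOpenQuotientMap_mk).isQuotientMap.continuous_iff.mpr
    have hco : (ψbar ∘ (QuotientAddGroup.mk : (Fin g → ℂ) → (Fin g → ℂ) ⧸ Λ))
        = (QuotientAddGroup.mk : (Fin g → ℝ) → (Fin g → ℝ) ⧸ L₂) ∘ ψ :=
      funext fun z => QuotientAddGroup.map_mk Λ L₂ ψ _ z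
    rw [hco]
    exact (QuotientAddGroup.isOpenQuotientMap_mk).continuous.comp hψcont
  have hsingleton_closed : ∀ cc : Fin g → ℝ,
      IsClosed {(QuotientAddGroup.mk cc : (Fin g → ℝ) ⧸ L₂)} := by
    intro cc
    apply (QuotientAddGroup.isOpenQuotientMap_mk).isQuotientMap.isClosed_preimage.mp
    have hset : ((QuotientAddGroup.mk : (Fin g → ℝ) → (Fin g → ℝ) ⧸ L₂)
        ⁻¹' {(QuotientAddGroup.mk cc : (Fin g → ℝ) ⧸ L₂)})
        = (fun w => w - cc) ⁻¹' (L₂ : Set (Fin g → ℝ)) := by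
      ext w
      simp only [Set.mem_preimage, Set.mem_singleton_iff, SetLike.mem_coe]
      exact QuotientAddGroup.eq_iff_sub_mem
    rw [hset]
    exact hL₂closed.preimage (continuous_id.sub continuous_const)
  have hC_psi : ∀ (v : K) (x : Fin g → ℝ),
      ψbar (QuotientAddGroup.mk (PtDef T x (lft v.1)))
        = QuotientAddGroup.mk (fun j => ((lft v.1 j : ℤ) : ℝ) / 2) := by
    intro v x
    rw [hψbar, QuotientAddGroup.map_mk]
    congr 1
    have hred : ψ (PtDef T x (lft v.1))
        = T⁻¹.mulVec (fun j => (PtDef T x (lft v.1) j).im) := rfl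
    rw [hred]
    have him : (fun j => (PtDef T x (lft v.1) j).im)
        = (2⁻¹ : ℝ) • T.mulVec (fun k => ((lft v.1 k : ℤ) : ℝ)) := by
      funext j
      rw [Pt_im, Pi.smul_apply, smul_eq_mul]
      ring
    rw [him, Matrix.mulVec_smul, Matrix.mulVec_mulVec, Matrix.nonsing_inv_mul T hTdet,
      Matrix.one_mulVec]
    funext j
    rw [Pi.smul_apply, smul_eq_mul]
    ring
  have hCclosed : ∀ v : K, ∃ F, IsClosed F ∧ C v = S ∩ F := by
    intro v
    refine ⟨ψbar ⁻¹' {QuotientAddGroup.mk (fun j => ((lft v.1 j : ℤ) : ℝ) / 2)},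
      (hsingleton_closed _).preimage hψbar_cont, ?_⟩
    apply Set.Subset.antisymm
    · intro q hq
      refine ⟨hCS v hq, ?_⟩
      obtain ⟨x, rfl⟩ := (hCmem v q).mp hq
      simpa using hC_psi v x
    · rintro q ⟨hqS, hqF⟩
      obtain ⟨v', hv'⟩ := Set.mem_iUnion.mp (hSsub hqS)
      obtain ⟨x, rfl⟩ := (hCmem v' q).mp hv'
      have h1 : (QuotientAddGroup.mk (fun j => ((lft v'.1 j : ℤ) : ℝ) / 2) : (Fin g → ℝ) ⧸ L₂)
          = QuotientAddGroup.mk (fun j => ((lft v.1 j : ℤ) : ℝ) / 2) := by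
        have h := hC_psi v' x
        simp only [Set.mem_preimage, Set.mem_singleton_iff] at hqF
        rw [h] at hqF
        exact hqF
      have h2 : ((fun j => ((lft v'.1 j : ℤ) : ℝ) / 2) - fun j => ((lft v.1 j : ℤ) : ℝ) / 2) ∈ L₂ :=
        QuotientAddGroup.eq_iff_sub_mem.mp h1
      rw [hL₂mem] at h2
      have hvv : v'.1 = v.1 := by
        apply hveq
        intro i
        obtain ⟨c, hc⟩ := h2 i
        rw [Pi.sub_apply] at hc
        refine ⟨c, ?_⟩
        have hr : ((lft v'.1 i - lft v.1 i : ℤ) : ℝ) = ((2 * c : ℤ) : ℝ) := by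
          push_cast
          linarith
        exact_mod_cast hr
      have hveq' : v' = v := Subtype.ext hvv
      rw [← hveq']
      exact (hCmem v' _).mpr ⟨x, rfl⟩
  -- connectedness and nonemptiness
  have hconn : ∀ v : K, IsPreconnected (C v) := by
    intro v
    rw [hC]
    apply isPreconnected_range
    apply Continuous.comp (QuotientAddGroup.isOpenQuotientMap_mk).continuous
    apply continuous_pi
    intro j
    exact (Complex.continuous_ofReal.comp (continuous_apply j)).add continuous_const
  have hne : ∀ v : K, (C v).Nonempty := fun v => ⟨_, (hCmem v _).mpr ⟨0, rfl⟩⟩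
  have hcover : S = ⋃ v : K, C v := Set.Subset.antisymm hSsub (Set.iUnion_subset hCS)
  -- conclude
  haveI : Finite K := Subtype.finite
  rw [aux_card_components S C hcover hne hconn hdisj hCclosed]
  -- cardinality of the kernel
  haveI : Fintype K := Fintype.ofFinite _
  have hcard : Nat.card K = 2 ^ (Module.finrank (ZMod 2) K) := by
    rw [Nat.card_eq_fintype_card, Module.card_eq_pow_finrank (K := ZMod 2) (V := K)]
    congr 1
  have hrk : (M.map (Int.cast : ℤ → ZMod 2)).rank + Module.finrank (ZMod 2) K = g := by
    have h := LinearMap.finrank_range_add_finrank_ker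
      (Matrix.mulVecLin (M.map (Int.cast : ℤ → ZMod 2)))
    rw [Module.finrank_pi, Fintype.card_fin] at h
    exact h
  rw [hcard]
  congr 1
  omega
end
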